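/- The function ε_0(a) = [G(2√a) − G(0)]/√a is strictly decreasing in a for a > 0, where G(x) = x·Q(x) − (1/√(2π))e^{−x²/2}. -/

import Mathlib

/-- The standard normal tail function `Q(x) = P(N(0,1) ≥ x)`. -/
noncomputable def gaussQ (x : ℝ) : ℝ :=
  ∫ t in Set.Ioi x, Real.exp (-t ^ 2 / 2) / Real.sqrt (2 * Real.pi)

/-- `G(x) = x Q(x) − φ(x)`, an antiderivative of `Q`. -/
noncomputable def gaussG (x : ℝ) : ℝ :=
  x * gaussQ x - Real.exp (-x ^ 2 / 2) / Real.sqrt (2 * Real.pi)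

/-!
Since `G' = Q`, the numerator `G(2√a) − G(0)` is `∫₀^{2√a} Q`, so `ε₀(a)` is twice the average
of `Q` over `[0, 2√a]`. The average of a strictly decreasing function over `[0, s]` strictly
decreases in `s`: passing from `[0, s]` to `[0, t]` adds values below `Q(s)`, while the old
average is strictly above `Q(s)`.
-/

open Real MeasureTheory intervalIntegral Set

theorem hasDerivAt_integral_Ioi {E : Type*} [NormedAddCommGroup E] [NormedSpace ℝ E]
    [CompleteSpace E] {f : ℝ → E} (hf : Continuous f) (hfi : Integrable f) (x : ℝ) :
    HasDerivAt (fun y => ∫ t in Ioi y, f t) (-f x) x := by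
  have htail :
      (fun y => ∫ t in Ioi y, f t) = fun y => (∫ t in Ioi 0, f t) - ∫ t in 0..y, f t :=
    funext fun y => eq_sub_of_add_eq' (integral_interval_add_Ioi hfi.integrableOn hfi.integrableOn)
  rw [htail]
  exact (hf.integral_hasStrictDerivAt 0 x).hasDerivAt.const_sub _

theorem strictAnti_integral_Ioi {f : ℝ → ℝ} (hfi : Integrable f) (hpos : ∀ x, 0 < f x) :
    StrictAnti fun y => ∫ t in Ioi y, f t := by
  intro s t hst
  have hdiff := integral_Ioi_sub_Ioi hfi.integrableOn hst.le
  have := intervalIntegral_pos_of_pos_on hfi.intervalIntegrable (fun x _ => hpos x) hst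
  dsimp only
  linarith

theorem StrictAntiOn.strictAntiOn_intervalAverage {f : ℝ → ℝ} {a : ℝ}
    (hf : StrictAntiOn f (Ici a)) : StrictAntiOn (fun s => ⨍ x in a..s, f x) (Ioi a) := by
  intro s (hs : a < s) t (ht : a < t) hst
  have hint : ∀ {u v}, a ≤ u → a ≤ v → IntervalIntegrable f volume u v := fun hu hv =>
    (hf.antitoneOn.mono fun _ hx => (le_min hu hv).trans hx.1).intervalIntegrable
  set I := ∫ x in a..s, f x
  set J := ∫ x in s..t, f x
  have hI : (s - a) * f s < I := by
    have := intervalIntegral_pos_of_pos_on ((hint le_rfl hs.le).sub intervalIntegrable_const)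
      (fun x hx => sub_pos.2 (hf (le_of_lt hx.1) hs.le hx.2)) hs
    rwa [integral_sub (hint le_rfl hs.le) intervalIntegrable_const, intervalIntegral.integral_const,
      smul_eq_mul, sub_pos] at this
  have hJ : J ≤ (t - s) * f s := by
    have := integral_mono_on hst.le (hint hs.le ht.le) intervalIntegrable_const
      fun x hx => hf.antitoneOn hs.le (hs.le.trans hx.1) hx.1
    rwa [intervalIntegral.integral_const, smul_eq_mul] at this
  have hsplit : ∫ x in a..t, f x = I + J :=
    (integral_add_adjacent_intervals (hint le_rfl hs.le) (hint hs.le ht.le)).symm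
  simp only [interval_average_eq_div, hsplit]
  rw [div_lt_div_iff₀ (sub_pos.2 ht) (sub_pos.2 hs)]
  nlinarith [mul_le_mul_of_nonneg_left hJ (sub_pos.2 hs).le]

/-- The standard normal density, written exactly as in `gaussQ` and `gaussG` so that
`gaussQ x = ∫ t in Ioi x, gaussPhi t` and `gaussG x = x * gaussQ x - gaussPhi x` hold by `rfl`. -/
noncomputable def gaussPhi (t : ℝ) : ℝ :=
  exp (-t ^ 2 / 2) / sqrt (2 * π)

theorem gaussPhi_pos (t : ℝ) : 0 < gaussPhi t := by
  unfold gaussPhi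
  positivity

theorem continuous_gaussPhi : Continuous gaussPhi := by
  unfold gaussPhi
  fun_prop

theorem integrable_gaussPhi : Integrable gaussPhi := by
  have h := (integrable_exp_neg_mul_sq (b := 1 / 2) (by norm_num)).div_const (sqrt (2 * π))
  refine h.congr (ae_of_all _ fun t => ?_)
  simp only [gaussPhi]
  ring_nf

theorem hasDerivAt_gaussPhi (x : ℝ) : HasDerivAt gaussPhi (-x * gaussPhi x) x := by
  have hexp : HasDerivAt (fun t : ℝ => -t ^ 2 / 2) (-x) x :=
    ((hasDerivAt_pow 2 x).neg.div_const 2).congr_deriv (by ring)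
  exact (hexp.exp.div_const _).congr_deriv (by simp only [gaussPhi]; ring)

theorem gaussQ_strictAnti : StrictAnti gaussQ :=
  strictAnti_integral_Ioi integrable_gaussPhi gaussPhi_pos

theorem hasDerivAt_gaussQ (x : ℝ) : HasDerivAt gaussQ (-gaussPhi x) x :=
  hasDerivAt_integral_Ioi continuous_gaussPhi integrable_gaussPhi x

theorem hasDerivAt_gaussG (x : ℝ) : HasDerivAt gaussG (gaussQ x) x :=
  (((hasDerivAt_id x).mul (hasDerivAt_gaussQ x)).sub (hasDerivAt_gaussPhi x)).congr_deriv
    (by simp only [id]; ring)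

theorem gaussG_sub_gaussG (s t : ℝ) : gaussG t - gaussG s = ∫ x in s..t, gaussQ x :=
  (integral_eq_sub_of_hasDerivAt (fun x _ => hasDerivAt_gaussG x)
    gaussQ_strictAnti.antitone.intervalIntegrable).symm

/-- The function `ε₀(a) = [G(2√a) − G(0)]/√a` is strictly decreasing
for `a > 0`. -/
theorem eps0_strictAntiOn :
    StrictAntiOn (fun a : ℝ => (gaussG (2 * Real.sqrt a) - gaussG 0) / Real.sqrt a)
      (Set.Ioi (0 : ℝ)) := by
  have havg := (gaussQ_strictAnti.strictAntiOn (Ici 0)).strictAntiOn_intervalAverage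
  have hsqrt : StrictMonoOn (fun a => 2 * sqrt a) (Ioi 0) := fun a ha b _ hab => by
    simpa using sqrt_lt_sqrt (le_of_lt ha) hab
  have hmaps : MapsTo (fun a => 2 * sqrt a) (Ioi 0) (Ioi 0) := fun a (ha : 0 < a) => by
    simpa using sqrt_pos.2 ha
  have heps : ∀ a, (gaussG (2 * sqrt a) - gaussG 0) / sqrt a =
      2 * ⨍ x in 0..2 * sqrt a, gaussQ x := fun a => by
    rw [gaussG_sub_gaussG, interval_average_eq_div, sub_zero]
    field_simp
  intro a ha b hb hab
  simp only [heps]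
  have := (havg.comp_strictMonoOn hsqrt hmaps) ha hb hab
  simp only [Function.comp] at this
  linarith
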